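/- arXiv:1312.3164 — 2 statements merged into one kernel-verified Lean document; each statement's English description precedes it below -/
import Mathlib

section
/- For all integers a, b, m, n, k with k ≥ 1, 0 ≤ a ≤ m, ka ≤ b ≤ n and n ≥ km, the number of lattice paths from (a,b) to (m,n) with unit steps (1,0) and (0,1) that stay weakly above the line y = kx equals the sum over i from 0 to ⌊(b-ka)/(k+1)⌋ of (-1)^i · (n+1-km)/(n+1-k(a+i)) · C(m+n-(k+1)(a+i), m-a-i) · C(b-k(a+i), i), where the equality is of rational numbers. -/
/-- Binomial coefficient `C(a,b)` for integers, with the convention that it is `0` when `b < 0`. -/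
def ichoose (a b : ℤ) : ℤ := if 0 ≤ b then (a.toNat.choose b.toNat : ℤ) else 0

/-- Lattice paths from `(a,b)` to `(m,n)` with unit steps `(1,0)` and `(0,1)`
(encoded as the list of steps, `true` = `(1,0)`, `false` = `(0,1)`) such that every point
`(x,y)` on the path satisfies `y ≥ k*x`, i.e. the path stays weakly above the line `y = kx`. -/
def A (k a b m n : ℤ) : Set (List Bool) :=
  { s | a + (s.count true : ℤ) = m ∧ b + (s.count false : ℤ) = n ∧
        ∀ t, t <+: s → k * (a + (t.count true : ℤ)) ≤ b + (t.count false : ℤ) }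

/-!
Both sides satisfy the same recursion. A path from `(a, b)` starts with a step to `(a + 1, b)`,
allowed only when `k (a + 1) ≤ b`, or to `(a, b + 1)`; with the boundary values `1` on the column
`a = m` and `0` on the row `b = n + 1` this determines the count. The alternating sum obeys the
same recursion by Pascal's rule applied to its last binomial coefficient, and equals `1` on the
column `a = m`. That it vanishes on the row `b = n + 1` is, after reversing the order of
summation, the inversion formula `∑ⱼ (-1)ʲ R(q, j) C(c + k j, r - j) = C(c - q, r)` for the Raney
numbers `R(q, j) = q / (q + (k + 1) j) C(q + (k + 1) j, j)`, taken at `c = q = n + 1 - k m`; it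
follows by induction on `r` and `q` from `R(q + 1, j + 1) = R(q, j + 1) + R(q + k + 1, j)`.
-/

open Finset

@[simp]
lemma ichoose_zero_right (t : ℤ) : ichoose t 0 = 1 := by simp [ichoose]

lemma ichoose_of_neg (t : ℤ) {i : ℤ} (hi : i < 0) : ichoose t i = 0 := by
  simp [ichoose, hi.not_ge]

lemma ichoose_natCast (p r : ℕ) : ichoose p r = p.choose r := by simp [ichoose]

lemma ichoose_eq_zero_of_lt {t i : ℤ} (h : t < i) (hi : 0 < i) : ichoose t i = 0 := by
  rw [ichoose, if_pos hi.le, Nat.choose_eq_zero_of_lt (by omega), Nat.cast_zero]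

/- Negative upper arguments count as `0`, so for `t < 0` and `i = 1` the left side is `0` and the
right side `1`. -/
lemma ichoose_succ_left {t i : ℤ} (h : 0 ≤ t ∨ i ≠ 1) :
    ichoose (t + 1) i = ichoose t i + ichoose t (i - 1) := by
  rcases lt_trichotomy i 0 with hi | rfl | hi
  · rw [ichoose_of_neg _ hi, ichoose_of_neg _ hi, ichoose_of_neg _ (by omega), add_zero]
  · simp [ichoose_of_neg]
  rcases lt_or_ge t 0 with ht | ht
  · rw [ichoose_eq_zero_of_lt (by omega) hi, ichoose_eq_zero_of_lt (by omega) hi,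
      ichoose_eq_zero_of_lt (by omega) (by omega), add_zero]
  obtain ⟨p, rfl⟩ := Int.eq_ofNat_of_zero_le ht
  obtain ⟨r, rfl⟩ : ∃ r : ℕ, i = r + 1 := ⟨(i - 1).toNat, by omega⟩
  rw [add_sub_cancel_right, ← Nat.cast_succ, ← Nat.cast_succ, ichoose_natCast, ichoose_natCast,
    ichoose_natCast, Nat.choose_succ_succ', Nat.cast_add, add_comm]

lemma ichoose_succ_right_eq {t : ℤ} (ht : 0 ≤ t) (i : ℕ) :
    ichoose t (i + 1) * (i + 1) = ichoose t i * (t - i) := by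
  obtain ⟨p, rfl⟩ := Int.eq_ofNat_of_zero_le ht
  rcases le_or_gt i p with hip | hip
  · rw [← Nat.cast_succ, ichoose_natCast, ichoose_natCast, ← Nat.cast_sub hip]
    exact_mod_cast Nat.choose_succ_right_eq p i
  · rw [ichoose_eq_zero_of_lt (by omega) (by omega), ichoose_eq_zero_of_lt (by omega) (by omega),
      zero_mul, zero_mul]

/-- The Raney number `q / (q + (k+1) j) * C(q + (k+1) j, j)`, in a form that is visibly an
integer. -/
def raney (k q : ℤ) (j : ℕ) : ℤ :=
  ichoose (q + (k + 1) * j - 1) j - k * ichoose (q + (k + 1) * j - 1) (j - 1)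

@[simp]
lemma raney_zero_right (k q : ℤ) : raney k q 0 = 1 := by
  simp [raney, ichoose_of_neg]

lemma raney_mul_add {k q : ℤ} (hk : 0 ≤ k) (hq : 0 ≤ q) (j : ℕ) :
    raney k q j * (q + k * j) = q * ichoose (q + (k + 1) * j - 1) j := by
  rcases j with _ | j
  · simp
  have key := ichoose_succ_right_eq (t := q + (k + 1) * (j + 1) - 1) (by nlinarith) j
  simp only [raney, Nat.cast_succ, add_sub_cancel_right]
  linear_combination k * key

lemma raney_zero_left {k : ℤ} (hk : 0 ≤ k) {j : ℕ} (hj : j ≠ 0) : raney k 0 j = 0 := by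
  obtain ⟨j, rfl⟩ := Nat.exists_eq_succ_of_ne_zero hj
  have key := ichoose_succ_right_eq (t := (k + 1) * (j + 1) - 1) (by nlinarith) j
  have h : raney k 0 (j + 1) * (j + 1) = 0 := by
    simp only [raney, Nat.cast_succ, zero_add, add_sub_cancel_right]
    linear_combination key
  exact (mul_eq_zero.1 h).resolve_right (by positivity)

lemma raney_eq_div {k q : ℤ} (hk : 0 ≤ k) (hq : 0 < q) (j : ℕ) :
    (raney k q j : ℚ) = q / (q + k * j) * ichoose (q + (k + 1) * j - 1) j := by
  have hpos : (0 : ℚ) < q + k * j := by positivity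
  rw [div_mul_eq_mul_div, eq_div_iff hpos.ne']
  exact_mod_cast raney_mul_add hk hq.le j

lemma raney_succ_succ {k q : ℤ} (hk : 0 ≤ k) (hq : 0 ≤ q) (j : ℕ) :
    raney k (q + 1) (j + 1) = raney k q (j + 1) + raney k (q + k + 1) j := by
  have hX : 0 ≤ q + (k + 1) * (j + 1) - 1 := by nlinarith
  have p1 := ichoose_succ_left (i := j + 1) (Or.inl hX)
  have p2 := ichoose_succ_left (i := j) (Or.inl hX)
  simp only [raney, Nat.cast_succ, add_sub_cancel_right] at p1 p2 ⊢
  rw [show q + 1 + (k + 1) * (j + 1) - 1 = q + (k + 1) * (j + 1) - 1 + 1 by ring,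
    show q + k + 1 + (k + 1) * j - 1 = q + (k + 1) * (j + 1) - 1 by ring, p1, p2]
  ring

theorem sum_raney_mul_ichoose {k : ℤ} (hk : 0 ≤ k) (R : ℕ) {q c : ℤ} (hq : 0 ≤ q) (hqc : q ≤ c) :
    ∑ j ∈ range (R + 1), (-1) ^ j * raney k q j * ichoose (c + k * j) (R - j) =
      ichoose (c - q) R := by
  induction R generalizing q c with
  | zero => simp
  | succ R ih =>
    induction q, hq using Int.leInduction generalizing c with
    | base =>
      rw [sum_eq_single 0 (fun j _ hj => by rw [raney_zero_left hk hj]; ring) (by simp)]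
      simp
    | succ q hq ihq =>
      have h1 := ihq (c := c) (by omega)
      have h2 := ih (q := q + k + 1) (c := c + k) (by omega) (by omega)
      have pascal := ichoose_succ_left (t := c - (q + 1)) (i := R + 1) (Or.inl (by omega))
      rw [sum_range_succ'] at h1 ⊢
      rw [show c + k - (q + k + 1) = c - (q + 1) by ring] at h2
      rw [show c - (q + 1) + 1 = c - q by ring, show (R : ℤ) + 1 - 1 = R by ring] at pascal
      -- `raney_succ_succ` splits the sum into the one for `q` and, shifted by one index, the one
      -- for `(q + k + 1, c + k, R)`.
      have shift : ∀ j ∈ range (R + 1),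
          (-1) ^ (j + 1) * raney k (q + 1) (j + 1) *
              ichoose (c + k * ↑(j + 1)) (↑(R + 1) - ↑(j + 1)) =
            (-1) ^ (j + 1) * raney k q (j + 1) * ichoose (c + k * ↑(j + 1)) (↑(R + 1) - ↑(j + 1))
            - (-1) ^ j * raney k (q + k + 1) j * ichoose (c + k + k * j) (R - j) := by
        intro j _
        rw [raney_succ_succ hk hq]
        push_cast
        rw [show c + k * (j + 1) = c + k + k * j by ring,
          show (R : ℤ) + 1 - (j + 1) = R - j by ring]
        ring
      rw [sum_congr rfl shift, sum_sub_distrib]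
      simp only [raney_zero_right] at h1 ⊢
      push_cast at h1 h2 pascal ⊢
      linear_combination h1 - h2 + pascal

noncomputable def ballotTerm (k m n a b : ℤ) (i : ℕ) : ℚ :=
  (-1 : ℚ) ^ i * ((n : ℚ) + 1 - (k : ℚ) * (m : ℚ)) /
      ((n : ℚ) + 1 - (k : ℚ) * ((a : ℚ) + (i : ℚ))) *
    (ichoose (m + n - (k + 1) * (a + (i : ℤ))) (m - a - (i : ℤ)) : ℚ) *
    (ichoose (b - k * (a + (i : ℤ))) (i : ℤ) : ℚ)

/-- The range does not depend on `a` and `b`; the omitted terms vanish whenever `0 ≤ k`, `0 ≤ a`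
and `b ≤ n + 1`. -/
noncomputable def ballotSum (k m n a b : ℤ) : ℚ := ∑ i ∈ range (n.toNat + 2), ballotTerm k m n a b i

section ballot

variable {k m n a b : ℤ}

lemma ballotTerm_eq_zero_of_sub_lt {i : ℕ} (h : m - a < i) : ballotTerm k m n a b i = 0 := by
  simp [ballotTerm, ichoose_of_neg _ (sub_neg.2 h)]

lemma ballotTerm_eq_zero_of_lt {i : ℕ} (hi : i ≠ 0) (h : b - k * a < (k + 1) * i) :
    ballotTerm k m n a b i = 0 := by
  have : ichoose (b - k * (a + i)) i = 0 := ichoose_eq_zero_of_lt (by linarith) (by omega)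
  simp [ballotTerm, this]

lemma ballotTerm_zero_succ : ballotTerm k m n a (b + 1) 0 = ballotTerm k m n a b 0 := by
  simp [ballotTerm]

lemma ballotTerm_sub_ballotTerm_succ (hb : k * (a + 1) ≤ b) (i : ℕ) :
    ballotTerm k m n a b (i + 1) - ballotTerm k m n a (b + 1) (i + 1) =
      ballotTerm k m n (a + 1) b i := by
  have pascal := ichoose_succ_left (t := b - k * (a + 1 + i)) (i := i + 1)
    (by rcases i with _ | i
        · left; push_cast; linarith
        · right; push_cast; omega)
  simp only [ballotTerm]
  push_cast
  rw [show b - k * (a + (i + 1)) = b - k * (a + 1 + i) by ring,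
    show b + 1 - k * (a + (i + 1)) = b - k * (a + 1 + i) + 1 by ring, pascal,
    show m + n - (k + 1) * (a + (i + 1)) = m + n - (k + 1) * (a + 1 + i) by ring,
    show m - a - (i + 1) = m - (a + 1) - i by ring, add_sub_cancel_right]
  push_cast
  ring

lemma ballotTerm_n_add_one (hk : 0 ≤ k) (hq : 0 < n + 1 - k * m) {i j : ℕ} (hij : a + i + j = m) :
    ballotTerm k m n a (n + 1) i =
      (-1) ^ i * raney k (n + 1 - k * m) j * ichoose (n + 1 - k * m + k * j) i := by
  have hden : (n : ℚ) + 1 - k * (a + i) = (n + 1 - k * m : ℤ) + k * j := by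
    rw [← hij]; push_cast; ring
  rw [ballotTerm, hden, show m + n - (k + 1) * (a + i) = n + 1 - k * m + (k + 1) * j - 1 by
      rw [← hij]; ring, show m - a - i = j by omega,
    show n + 1 - k * (a + i) = n + 1 - k * m + k * j by rw [← hij]; ring]
  push_cast [raney_eq_div hk hq]
  ring

lemma ballotSum_eq_of_lt (hk : 0 ≤ k) (hb : b < k * (a + 1)) :
    ballotSum k m n a b = ballotSum k m n a (b + 1) := by
  refine sum_congr rfl fun i _ => ?_
  rcases eq_or_ne i 0 with rfl | hi
  · exact ballotTerm_zero_succ.symm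
  · have : k + 1 ≤ (k + 1) * i := le_mul_of_one_le_right (by omega) (by omega)
    rw [ballotTerm_eq_zero_of_lt hi (by linarith), ballotTerm_eq_zero_of_lt hi (by linarith)]

lemma ballotSum_eq_add (hk : 0 ≤ k) (ha : 0 ≤ a) (hb : k * (a + 1) ≤ b) (hbn : b ≤ n) :
    ballotSum k m n a b = ballotSum k m n (a + 1) b + ballotSum k m n a (b + 1) := by
  have hn : (n.toNat : ℤ) = n := Int.toNat_of_nonneg (by nlinarith)
  have hlast : ballotTerm k m n (a + 1) b (n.toNat + 1) = 0 :=
    ballotTerm_eq_zero_of_lt (by omega) (by push_cast; nlinarith)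
  rw [← sub_eq_iff_eq_add, ballotSum, ballotSum, ← sum_sub_distrib, sum_range_succ',
    ballotTerm_zero_succ, sub_self, add_zero, ballotSum, sum_range_succ _ (n.toNat + 1), hlast,
    add_zero]
  exact sum_congr rfl fun i _ => ballotTerm_sub_ballotTerm_succ hb i

lemma ballotSum_self_left (hn : k * m ≤ n) : ballotSum k m n m b = 1 := by
  rw [ballotSum, sum_eq_single_of_mem 0 (by simp)
    fun i _ hi => ballotTerm_eq_zero_of_sub_lt (by simp; omega)]
  have : (n : ℚ) + 1 - k * m ≠ 0 := by
    have : ((k * m : ℤ) : ℚ) ≤ n := by exact_mod_cast hn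
    push_cast at this; linarith
  simp [ballotTerm, this]

lemma ballotSum_n_add_one (hk : 1 ≤ k) (ha : 0 ≤ a) (ham : a < m) (hn : k * m ≤ n) :
    ballotSum k m n a (n + 1) = 0 := by
  obtain ⟨R, hR⟩ : ∃ R : ℕ, a + R = m := ⟨(m - a).toNat, by omega⟩
  have hRn : R + 1 ≤ n.toNat + 2 := by
    have : m ≤ k * m := le_mul_of_one_le_left (by omega) hk
    omega
  have hq : 0 < n + 1 - k * m := by omega
  have hterm : ∀ j ∈ range (R + 1), ballotTerm k m n a (n + 1) (R + 1 - 1 - j) =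
      (-1) ^ R * ((-1) ^ j * raney k (n + 1 - k * m) j *
        ichoose (n + 1 - k * m + k * j) (R - j) : ℤ) := by
    intro j hj
    obtain ⟨i, rfl⟩ : ∃ i, R = i + j := ⟨R - j, by simp at hj; omega⟩
    have hsq : (-1 : ℚ) ^ j * (-1) ^ j = 1 := by rw [← pow_add]; exact Even.neg_one_pow ⟨j, rfl⟩
    rw [show i + j + 1 - 1 - j = i by omega,
      ballotTerm_n_add_one (j := j) (by omega) hq (by push_cast at hR; linarith)]
    push_cast
    rw [add_sub_cancel_right, pow_add]
    linear_combination (-(-1) ^ i * (raney k (n + 1 - k * m) j : ℚ) *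
      (ichoose (n + 1 - k * m + k * j) i : ℚ)) * hsq
  rw [ballotSum, ← sum_subset (range_subset_range.2 hRn)
      fun i _ hi => ballotTerm_eq_zero_of_sub_lt (by simp at hi; omega),
    ← sum_range_reflect, sum_congr rfl hterm, ← mul_sum, ← Int.cast_sum,
    sum_raney_mul_ichoose (by omega) R hq.le le_rfl, sub_self,
    ichoose_eq_zero_of_lt (by omega) (by omega)]
  simp

end ballot

lemma List.forall_prefix_cons_iff {α : Type*} (p : List α → Prop) (x : α) (u : List α) :
    (∀ t, t <+: x :: u → p t) ↔ p [] ∧ ∀ t, t <+: u → p (x :: t) := by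
  simp only [List.prefix_cons_iff]
  constructor
  · exact fun h => ⟨h [] (Or.inl rfl), fun t ht => h _ (Or.inr ⟨t, rfl, ht⟩)⟩
  · rintro ⟨h0, h⟩ t (rfl | ⟨t, rfl, ht⟩)
    exacts [h0, h t ht]

section paths

variable {k a b m n : ℤ}

lemma nil_mem_A : [] ∈ A k a b m n ↔ a = m ∧ b = n ∧ k * a ≤ b := by
  simp [A]

lemma true_cons_mem_A {u : List Bool} :
    true :: u ∈ A k a b m n ↔ k * a ≤ b ∧ u ∈ A k (a + 1) b m n := by
  simp [A, List.forall_prefix_cons_iff, ← add_assoc, add_right_comm _ (1 : ℤ)]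
  tauto

lemma false_cons_mem_A {u : List Bool} :
    false :: u ∈ A k a b m n ↔ k * a ≤ b ∧ u ∈ A k a (b + 1) m n := by
  simp [A, List.forall_prefix_cons_iff, ← add_assoc, add_right_comm _ (1 : ℤ)]
  tauto

lemma A_finite : (A k a b m n).Finite :=
  (List.finite_length_eq Bool ((m - a) + (n - b)).toNat).subset fun s ⟨h1, h2, _⟩ => by
    have := List.count_true_add_count_false s
    simp only [Set.mem_ofPred_eq]
    omega

lemma A_eq_empty_of_lt_mul (h : b < k * a) : A k a b m n = ∅ :=
  Set.eq_empty_of_forall_notMem fun s ⟨_, _, hs⟩ => by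
    have := hs [] List.nil_prefix
    simp only [List.count_nil, Nat.cast_zero, add_zero] at this
    omega

lemma A_eq_empty_of_m_lt (h : m < a) : A k a b m n = ∅ :=
  Set.eq_empty_of_forall_notMem fun _ ⟨hs, _⟩ => by omega

lemma A_eq_empty_of_n_lt (h : n < b) : A k a b m n = ∅ :=
  Set.eq_empty_of_forall_notMem fun _ ⟨_, hs, _⟩ => by omega

lemma A_self (h : k * m ≤ n) : A k m n m n = {[]} := by
  ext (_ | ⟨_ | _, u⟩)
  · simpa [nil_mem_A] using h
  · simp [false_cons_mem_A, A_eq_empty_of_n_lt (lt_add_one n)]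
  · simp [true_cons_mem_A, A_eq_empty_of_m_lt (lt_add_one m)]

lemma A_eq_union (hab : k * a ≤ b) (hne : a ≠ m ∨ b ≠ n) :
    A k a b m n = List.cons true '' A k (a + 1) b m n ∪ List.cons false '' A k a (b + 1) m n := by
  ext (_ | ⟨_ | _, u⟩)
  · simp [nil_mem_A]; tauto
  · simp [false_cons_mem_A, hab]
  · simp [true_cons_mem_A, hab]

lemma ncard_A_eq_add (hab : k * a ≤ b) (hne : a ≠ m ∨ b ≠ n) :
    (A k a b m n).ncard = (A k (a + 1) b m n).ncard + (A k a (b + 1) m n).ncard := by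
  rw [A_eq_union hab hne, Set.ncard_union_eq _ (A_finite.image _) (A_finite.image _),
    Set.ncard_image_of_injective _ List.cons_injective,
    Set.ncard_image_of_injective _ List.cons_injective]
  exact Set.disjoint_left.2 fun _ ⟨_, _, hu⟩ ⟨_, _, hv⟩ => by simp [← hu] at hv

end paths

lemma ncard_A_self_left {k m n b : ℤ} (hb : k * m ≤ b) (hbn : b ≤ n) : (A k m b m n).ncard = 1 := by
  rcases hbn.eq_or_lt with rfl | hlt
  · rw [A_self hb, Set.ncard_singleton]
  rw [ncard_A_eq_add hb (Or.inr hlt.ne), A_eq_empty_of_m_lt (lt_add_one m), Set.ncard_empty,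
    zero_add]
  exact ncard_A_self_left (by omega) hlt
termination_by (n - b).toNat

theorem ncard_A_eq_ballotSum {k m n : ℤ} (hk : 1 ≤ k) (hn : k * m ≤ n) {a b : ℤ} (ha : 0 ≤ a)
    (ham : a ≤ m) (hab : k * a ≤ b) (hb : b ≤ n + 1) (htop : b = n + 1 → a < m) :
    ((A k a b m n).ncard : ℚ) = ballotSum k m n a b := by
  rcases hb.eq_or_lt with rfl | hbn
  · rw [A_eq_empty_of_n_lt (lt_add_one n), ballotSum_n_add_one hk ha (htop rfl) hn]
    simp
  rcases ham.eq_or_lt with rfl | ham'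
  · rw [ncard_A_self_left hab (by omega), ballotSum_self_left hn, Nat.cast_one]
  rw [ncard_A_eq_add hab (Or.inl ham'.ne), Nat.cast_add,
    ncard_A_eq_ballotSum hk hn ha ham (by omega) (by omega) (fun _ => ham')]
  rcases le_or_gt (k * (a + 1)) b with hright | hup
  · rw [ncard_A_eq_ballotSum hk hn (by omega) ham' hright (by omega) (by omega),
      ballotSum_eq_add (by omega) ha hright (by omega)]
  · rw [A_eq_empty_of_lt_mul hup, Set.ncard_empty, Nat.cast_zero, zero_add,
      ballotSum_eq_of_lt (by omega) hup]
termination_by ((m - a) + (n + 1 - b)).toNat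

lemma Int.toNat_floor_div_lt_iff {d c : ℤ} (hd : 0 ≤ d) (hc : 0 < c) (i : ℕ) :
    ⌊(d : ℚ) / c⌋.toNat < i ↔ d < c * i := by
  rcases eq_or_ne i 0 with rfl | hi
  · simpa using hd
  rw [Int.toNat_lt' (by omega), Int.floor_lt, div_lt_iff₀ (by exact_mod_cast hc)]
  norm_cast
  rw [mul_comm]

lemma ballotSum_eq_sum_floor {k m n a b : ℤ} (hk : 0 ≤ k) (ha : 0 ≤ a) (hab : k * a ≤ b)
    (hbn : b ≤ n) :
    ballotSum k m n a b =
      ∑ i ∈ range (⌊((b : ℚ) - k * a) / (k + 1)⌋.toNat + 1), ballotTerm k m n a b i := by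
  have hfloor := Int.toNat_floor_div_lt_iff (d := b - k * a) (c := k + 1) (by omega) (by omega)
  push_cast at hfloor
  have hn : (n.toNat : ℤ) = n := Int.toNat_of_nonneg (by nlinarith)
  refine (sum_subset (range_subset_range.2 ?_) fun i _ hi => ?_).symm
  · have := (hfloor (n.toNat + 1)).2 (by push_cast; nlinarith)
    omega
  · simp only [mem_range, not_lt] at hi
    exact ballotTerm_eq_zero_of_lt (by omega) ((hfloor i).1 (by omega))

theorem card_above_eq_sum (a b m n k : ℤ) (hk : 1 ≤ k) (ha : 0 ≤ a) (ham : a ≤ m)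
    (hka : k * a ≤ b) (hbn : b ≤ n) (hn : k * m ≤ n) :
    ((A k a b m n).ncard : ℚ) =
      ∑ i ∈ Finset.range ((⌊((b : ℚ) - (k : ℚ) * (a : ℚ)) / ((k : ℚ) + 1)⌋).toNat + 1),
        (-1 : ℚ) ^ i * ((n : ℚ) + 1 - (k : ℚ) * (m : ℚ)) /
            ((n : ℚ) + 1 - (k : ℚ) * ((a : ℚ) + (i : ℚ))) *
          (ichoose (m + n - (k + 1) * (a + (i : ℤ))) (m - a - (i : ℤ)) : ℚ) *
          (ichoose (b - k * (a + (i : ℤ))) (i : ℤ) : ℚ) := by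
  rw [ncard_A_eq_ballotSum hk hn ha ham hka (by omega) (by omega),
    ballotSum_eq_sum_floor (by omega) ha hka hbn]
  rfl
end

section
/- For all integers m, n with n ≥ 1 and m ≥ n, the determinant D(m+1, n+1, 0, 2) equals the ballot number (m-n+1)/(m+1) · C(m+n, n), where the equality is of rational numbers. -/
/-- The determinant `D(m,n,u,k)` of the `(n-1)×(n-1)` matrix with `(i,j)` entry
`C(m - max{u, (k-1)j}, 1 - i + j)` for `i, j = 1, …, n-1`. -/
def D (m n u k : ℤ) : ℤ :=
  Matrix.det (Matrix.of fun i j : Fin (n - 1).toNat =>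
    ichoose (m - max u ((k - 1) * ((j : ℤ) + 1))) (1 - ((i : ℤ) + 1) + ((j : ℤ) + 1)))

/-!
The matrix is lower Hessenberg with ones on the subdiagonal. The signed ballot numbers
`c k = (-1)^k (m + 1 - k) C(m + k, k)` form a left null vector of its columns (extended by one row):
this follows from the alternating Chu–Vandermonde identity
`∑ₖ (-1)^k C(a + k, k) C(b, n - k) = (-1)^n C(a - b + n, n)`.
Multiplying by the lower triangular matrix whose rows are the truncations of `c` gives an upper
triangular matrix with diagonal `-c (i + 1)`, so the determinant telescopes to
`(-1)^n c n / c 0 = (m + 1 - n) C(m + n, n) / (m + 1)`.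
-/

open Finset

theorem ichoose_natCast_s16 (a b : ℕ) : ichoose a b = a.choose b := by
  simp [ichoose]

theorem ichoose_of_neg_s16 (a : ℤ) {b : ℤ} (hb : b < 0) : ichoose a b = 0 :=
  if_neg hb.not_ge

/-- `(-1)^k C(a + k, k)` is the generalized binomial coefficient `C(-(a + 1), k)`, so this is
Chu–Vandermonde for `C(b - a - 1, n)`. -/
theorem sum_neg_one_pow_mul_add_choose_mul_choose {a b : ℕ} (h : b ≤ a) (n : ℕ) :
    ∑ k ∈ range (n + 1), (-1 : ℤ) ^ k * (a + k).choose k * b.choose (n - k) =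
      (-1) ^ n * (a - b + n).choose n := by
  have hneg (r k : ℕ) : Ring.choose (-((r : ℤ) + 1)) k = (-1) ^ k * (r + k).choose k := by
    rw [Ring.choose_neg, Units.smul_def, Int.coe_negOnePow_natCast, smul_eq_mul,
      show (r : ℤ) + 1 + k - 1 = ((r + k : ℕ) : ℤ) by push_cast; ring, Ring.choose_natCast]
  have := Ring.add_choose_eq (r := -((a : ℤ) + 1)) (s := (b : ℤ)) n (Commute.all _ _)
  rw [show -((a : ℤ) + 1) + b = -(((a - b : ℕ) : ℤ) + 1) by push_cast [h]; ring, hneg,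
    Nat.sum_antidiagonal_eq_sum_range_succ_mk] at this
  simp only [hneg, Ring.choose_natCast] at this
  rw [this]

/-- Splitting `(M + 1 - k) C(M + k, k) = (M + 1) (C(M + k, k) - C(M + k, k - 1))` leaves two
alternating Vandermonde sums, `(M + 1) (-1)^j (C(2j + 1, j) - C(2j + 1, j + 1)) = 0`. -/
theorem sum_ballot_mul_choose_eq_zero {M j : ℕ} (hj : j ≤ M) :
    ∑ k ∈ range (j + 2),
      (-1 : ℤ) ^ k * ((M + 1 - k : ℤ) * (M + k).choose k) * (M - j).choose (j + 1 - k) = 0 := by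
  set g : ℕ → ℤ := fun k => (-1 : ℤ) ^ k * (M + k).choose k * (M - j).choose (j + 1 - k)
  have hsplit : ∑ k ∈ range (j + 2),
      (-1 : ℤ) ^ k * ((M + 1 - k : ℤ) * (M + k).choose k) * (M - j).choose (j + 1 - k) =
        (M + 1) * ∑ k ∈ range (j + 2), g k - ∑ k ∈ range (j + 2), k * g k := by
    rw [mul_sum, ← sum_sub_distrib]
    exact sum_congr rfl fun k _ => by ring
  have hshift : ∑ k ∈ range (j + 2), k * g k =
      -(M + 1) * ∑ k ∈ range (j + 1),
        (-1 : ℤ) ^ k * (M + 1 + k).choose k * (M - j).choose (j - k) := by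
    rw [sum_range_succ', mul_sum]
    simp only [CharP.cast_eq_zero, zero_mul, add_zero]
    refine sum_congr rfl fun k _ => ?_
    have hc : ((M + 1 + k).choose (k + 1) : ℤ) * (k + 1) = (M + 1 + k).choose k * (M + 1) := by
      have := Nat.choose_succ_right_eq (M + 1 + k) k
      rw [Nat.add_sub_cancel] at this
      exact_mod_cast this
    simp only [g, show j + 1 - (k + 1) = j - k by omega, show M + (k + 1) = M + 1 + k by omega]
    push_cast
    linear_combination (-1 : ℤ) ^ (k + 1) * (M - j).choose (j - k) * hc
  rw [hsplit, hshift, sum_neg_one_pow_mul_add_choose_mul_choose (Nat.sub_le M j),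
    sum_neg_one_pow_mul_add_choose_mul_choose (by omega : M - j ≤ M + 1),
    show M - (M - j) + (j + 1) = 2 * j + 1 by omega,
    show M + 1 - (M - j) + j = 2 * j + 1 by omega,
    ← Nat.choose_symm_half j]
  ring

theorem Matrix.det_hessenberg_of_sum_mul_eq_zero {R : Type*} [CommRing R] [IsDomain R] {N : ℕ}
    (a : ℕ → ℕ → R) (c : ℕ → R) (hzero : ∀ k j, j + 1 < k → a k j = 0)
    (hsub : ∀ j < N, a (j + 1) j = 1)
    (hnull : ∀ j < N, ∑ k ∈ range (j + 2), c k * a k j = 0)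
    (hc : ∀ k < N, c k ≠ 0) :
    c 0 * (of fun i j : Fin N => a i j).det = (-1) ^ N * c N := by
  set A : Matrix (Fin N) (Fin N) R := of fun i j => a i j
  let L : Matrix (Fin N) (Fin N) R := of fun i k => if (k : ℕ) ≤ i then c k else 0
  have hLA (i j : Fin N) : (L * A) i j = ∑ k ∈ range (i + 1), c k * a k j := by
    simp only [mul_apply, L, A, of_apply]
    rw [Fin.sum_univ_eq_sum_range (fun k => (if k ≤ i then c k else 0) * a k j),
      ← sum_subset (range_subset_range.mpr i.isLt)]
    · exact sum_congr rfl fun k hk => by simp [Nat.lt_succ_iff.mp (mem_range.mp hk)]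
    · intro k _ hk
      simp [show ¬k ≤ i by simpa [Nat.lt_succ_iff] using hk]
  have htrunc (i j : ℕ) (hji : j + 1 ≤ i) :
      ∑ k ∈ range (i + 1), c k * a k j = ∑ k ∈ range (j + 2), c k * a k j := by
    refine (sum_subset (range_subset_range.mpr (by omega)) fun k _ hk => ?_).symm
    rw [hzero k j (by simp at hk; omega), mul_zero]
  have hupper : (L * A).IsUpperTriangular := fun i j (hij : j < i) => by
    rw [hLA, htrunc i j hij, hnull j j.isLt]
  have hdiag (i : Fin N) : (L * A) i i = -c (i + 1) := by
    have := hnull i i.isLt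
    rw [sum_range_succ, hsub i i.isLt, mul_one] at this
    rw [hLA, eq_neg_of_add_eq_zero_left this]
  have hlower : L.IsLowerTriangular := fun i j (hij : i < j) => by
    simp [L, not_le.mpr hij]
  have hdet : (∏ i ∈ range N, c i) * A.det = (-1) ^ N * ∏ i ∈ range N, c (i + 1) := by
    have hL : L.det = ∏ i ∈ range N, c i := by
      rw [det_of_isLowerTriangular L hlower, ← Fin.prod_univ_eq_prod_range]
      simp [L]
    rw [← hL, ← det_mul, det_of_isUpperTriangular hupper]
    simp [hdiag, Fin.prod_univ_eq_prod_range (fun i => -c (i + 1)), prod_neg]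
  have htel : (∏ i ∈ range N, c (i + 1)) * c 0 = (∏ i ∈ range N, c i) * c N := by
    rw [← prod_range_succ', prod_range_succ]
  refine mul_left_cancel₀ (prod_ne_zero_iff.mpr fun k hk => hc k (mem_range.mp hk)) ?_
  linear_combination c 0 * hdet + (-1) ^ N * htel

theorem sum_ballot_mul_ichoose_eq_zero {M j : ℕ} (hj : j ≤ M) :
    ∑ k ∈ range (j + 2),
      (-1 : ℤ) ^ k * ((M + 1 - k : ℤ) * (M + k).choose k) *
        ichoose ((M : ℤ) - j) (j + 1 - k) = 0 := by
  rw [← sum_ballot_mul_choose_eq_zero hj]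
  refine sum_congr rfl fun k hk => ?_
  have hk : k ≤ j + 1 := Nat.lt_succ_iff.mp (mem_range.mp hk)
  rw [← Nat.cast_sub hj, show (j : ℤ) + 1 - k = ((j + 1 - k : ℕ) : ℤ) by omega,
    ichoose_natCast_s16]

theorem D_natCast_add_one_zero_two (m n : ℕ) :
    D (m + 1) (n + 1) 0 2 =
      (Matrix.of fun i j : Fin n =>
        ichoose ((m : ℤ) - (j : ℕ)) ((j : ℕ) + 1 - (i : ℕ))).det := by
  rw [D, add_sub_cancel_right, Int.toNat_natCast]
  congr with i j
  rw [max_eq_right (by omega)]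
  ring_nf

theorem natCast_add_one_mul_D {m n : ℕ} (h : n ≤ m) :
    ((m : ℤ) + 1) * D (m + 1) (n + 1) 0 2 = ((m : ℤ) + 1 - n) * (m + n).choose n := by
  have hdet := Matrix.det_hessenberg_of_sum_mul_eq_zero (N := n)
    (fun k j => ichoose ((m : ℤ) - j) (j + 1 - k))
    (fun k => (-1) ^ k * ((m + 1 - k : ℤ) * (m + k).choose k))
    (fun k j hjk => ichoose_of_neg_s16 _ (by omega)) (fun j _ => by simp [ichoose])
    (fun j hj => sum_ballot_mul_ichoose_eq_zero (by omega))
    (fun k hk => mul_ne_zero (pow_ne_zero _ (by norm_num))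
      (mul_ne_zero (by omega) (by exact_mod_cast (Nat.choose_pos (by omega)).ne')))
  simp only [pow_zero, CharP.cast_eq_zero, sub_zero, add_zero, Nat.choose_zero_right,
    Nat.cast_one, one_mul, mul_one, ← mul_assoc, ← pow_add, Even.neg_one_pow ⟨n, rfl⟩]
    at hdet
  rw [D_natCast_add_one_zero_two, hdet]

theorem det_eq_ballot (m n : ℤ) (hn : 1 ≤ n) (hm : n ≤ m) :
    (D (m + 1) (n + 1) 0 2 : ℚ) =
      ((m : ℚ) - (n : ℚ) + 1) / ((m : ℚ) + 1) * (ichoose (m + n) n : ℚ) := by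
  lift n to ℕ using (by omega)
  lift m to ℕ using (by omega)
  have h := natCast_add_one_mul_D (by omega : n ≤ m)
  rw [← Nat.cast_add, ichoose_natCast_s16, div_mul_eq_mul_div, eq_div_iff (by positivity)]
  exact_mod_cast (by linear_combination h :
    D (m + 1) (n + 1) 0 2 * ((m : ℤ) + 1) = ((m : ℤ) - n + 1) * (m + n).choose n)
end
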